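/- For every proper orthochronous Lorentz matrix L there exists A ∈ SL(2,ℂ) such that for every 2×2 complex matrix X and every i ∈ {0,1,2,3}: Tr(A X A† σ_i) = Σ_{j=0}^{3} L_{ij} Tr(X σ_j). (The map SL(2,ℂ) → SO⁺(3,1) induced by conjugation on the Pauli expansion is surjective.) -/

import Mathlib

open Matrix

noncomputable section

/-- The Pauli matrices σ₀ = I, σ₁, σ₂, σ₃. -/
def pauli : Fin 4 → Matrix (Fin 2) (Fin 2) ℂ :=
  ![1, !![0, 1; 1, 0], !![0, -Complex.I; Complex.I, 0], !![1, 0; 0, -1]]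

/-- The Minkowski metric η = diag(1,-1,-1,-1). -/
def η : Matrix (Fin 4) (Fin 4) ℝ := Matrix.diagonal ![1, -1, -1, -1]

/-- A proper orthochronous Lorentz matrix. -/
def LorentzPO (L : Matrix (Fin 4) (Fin 4) ℝ) : Prop :=
  Lᵀ * η * L = η ∧ L.det = 1 ∧ 1 ≤ L 0 0

namespace SL2L

/-- Circle parametrization with radius. -/
lemma circle (x y r : ℝ) (hr : 0 ≤ r) (h : x ^ 2 + y ^ 2 = r ^ 2) :
    ∃ θ : ℝ, r * Real.cos θ = x ∧ r * Real.sin θ = y := by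
  rcases eq_or_lt_of_le hr with hr0 | hr0
  · have hx : x = 0 := by nlinarith [sq_nonneg x, sq_nonneg y]
    have hy : y = 0 := by nlinarith [sq_nonneg x, sq_nonneg y]
    exact ⟨0, by rw [hx, ← hr0]; ring, by rw [hy, ← hr0]; simp⟩
  · set z : ℂ := ⟨x, y⟩ with hz
    have habs : ‖z‖ = r := by
      rw [Complex.norm_def, Complex.normSq_mk]
      rw [show x * x + y * y = r ^ 2 by nlinarith]
      exact Real.sqrt_sq hr
    have hz0 : z ≠ 0 := by
      intro hc
      rw [hc] at habs
      simp at habs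
      exact absurd habs.symm (ne_of_gt hr0)
    refine ⟨z.arg, ?_, ?_⟩
    · rw [Complex.cos_arg hz0, habs]
      field_simp
      rfl
    · rw [Complex.sin_arg, habs]
      field_simp
      rfl

/-- Sphere parametrization with radius. -/
lemma sphere (x y z r : ℝ) (hr : 0 ≤ r) (h : x ^ 2 + y ^ 2 + z ^ 2 = r ^ 2) :
    ∃ α β : ℝ, r * (Real.sin β * Real.cos α) = x ∧ r * (Real.sin β * Real.sin α) = y ∧
      r * Real.cos β = z := by
  set ρ := Real.sqrt (x ^ 2 + y ^ 2) with hρ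
  have hρ0 : 0 ≤ ρ := Real.sqrt_nonneg _
  have hρ2 : ρ ^ 2 = x ^ 2 + y ^ 2 := Real.sq_sqrt (by positivity)
  obtain ⟨β, hβ1, hβ2⟩ := circle z ρ r hr (by nlinarith)
  obtain ⟨α, hα1, hα2⟩ := circle x y ρ hρ0 (by nlinarith)
  refine ⟨α, β, ?_, ?_, hβ1⟩ <;> rw [← mul_assoc, hβ2] <;> assumption


open Real in
/-- Rotation about the z-axis. -/
def Rz (θ : ℝ) : Matrix (Fin 4) (Fin 4) ℝ :=
  !![1,0,0,0; 0,cos θ, -sin θ,0; 0,sin θ, cos θ,0; 0,0,0,1]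

open Real in
/-- Rotation about the y-axis. -/
def Ry (θ : ℝ) : Matrix (Fin 4) (Fin 4) ℝ :=
  !![1,0,0,0; 0,cos θ,0,sin θ; 0,0,1,0; 0,-sin θ,0,cos θ]

open Real in
/-- Boost along the z-axis. -/
def Bz (χ : ℝ) : Matrix (Fin 4) (Fin 4) ℝ :=
  !![cosh χ,0,0,sinh χ; 0,1,0,0; 0,0,1,0; sinh χ,0,0,cosh χ]

lemma Rz_mul_neg (θ : ℝ) : Rz θ * Rz (-θ) = 1 := by
  ext i j
  fin_cases i <;> fin_cases j <;>
    simp [Rz, mul_apply, Fin.sum_univ_four, Matrix.one_apply, Matrix.vecHead, Matrix.vecTail, Function.comp] <;>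
    nlinarith [Real.sin_sq_add_cos_sq θ]

lemma Ry_mul_neg (θ : ℝ) : Ry θ * Ry (-θ) = 1 := by
  ext i j
  fin_cases i <;> fin_cases j <;>
    simp [Ry, mul_apply, Fin.sum_univ_four, Matrix.one_apply, Matrix.vecHead, Matrix.vecTail, Function.comp] <;>
    nlinarith [Real.sin_sq_add_cos_sq θ]

lemma Bz_mul_neg (χ : ℝ) : Bz χ * Bz (-χ) = 1 := by
  ext i j
  fin_cases i <;> fin_cases j <;>
    simp [Bz, mul_apply, Fin.sum_univ_four, Matrix.one_apply, Matrix.vecHead, Matrix.vecTail, Function.comp] <;>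
    nlinarith [Real.cosh_sq_sub_sinh_sq χ]

lemma Rz_neg_mul (θ : ℝ) : Rz (-θ) * Rz θ = 1 := by
  have := Rz_mul_neg (-θ); rwa [neg_neg] at this

lemma Ry_neg_mul (θ : ℝ) : Ry (-θ) * Ry θ = 1 := by
  have := Ry_mul_neg (-θ); rwa [neg_neg] at this

lemma Bz_neg_mul (χ : ℝ) : Bz (-χ) * Bz χ = 1 := by
  have := Bz_mul_neg (-χ); rwa [neg_neg] at this

lemma Rz_lorentz (θ : ℝ) : (Rz θ)ᵀ * η * Rz θ = η := by
  ext i j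
  fin_cases i <;> fin_cases j <;>
    simp [Rz, η, mul_apply, Fin.sum_univ_four, Matrix.diagonal, transpose_apply, Matrix.vecHead, Matrix.vecTail, Function.comp] <;>
    nlinarith [Real.sin_sq_add_cos_sq θ]

lemma Ry_lorentz (θ : ℝ) : (Ry θ)ᵀ * η * Ry θ = η := by
  ext i j
  fin_cases i <;> fin_cases j <;>
    simp [Ry, η, mul_apply, Fin.sum_univ_four, Matrix.diagonal, transpose_apply, Matrix.vecHead, Matrix.vecTail, Function.comp] <;>
    nlinarith [Real.sin_sq_add_cos_sq θ]

lemma Bz_lorentz (χ : ℝ) : (Bz χ)ᵀ * η * Bz χ = η := by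
  ext i j
  fin_cases i <;> fin_cases j <;>
    simp [Bz, η, mul_apply, Fin.sum_univ_four, Matrix.diagonal, transpose_apply, Matrix.vecHead, Matrix.vecTail, Function.comp] <;>
    nlinarith [Real.cosh_sq_sub_sinh_sq χ]

lemma mul_lorentz {L M : Matrix (Fin 4) (Fin 4) ℝ} (hL : Lᵀ * η * L = η)
    (hM : Mᵀ * η * M = η) : (L * M)ᵀ * η * (L * M) = η := by
  rw [transpose_mul]
  calc Mᵀ * Lᵀ * η * (L * M) = Mᵀ * (Lᵀ * η * L) * M := by noncomm_ring
    _ = Mᵀ * η * M := by rw [hL]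
    _ = η := hM

lemma Rz_det (θ : ℝ) : (Rz θ).det = 1 := by
  rw [Rz, det_succ_row_zero]
  simp [Fin.sum_univ_succ, det_fin_three, Matrix.vecHead, Matrix.vecTail, Function.comp,
    (by decide : (Fin.castSucc 2 : Fin 4) = 2), (by decide : (Fin.castSucc 1 : Fin 4) = 1),
    (by decide : (Fin.castSucc 0 : Fin 4) = 0)]
  nlinarith [Real.sin_sq_add_cos_sq θ]

lemma Ry_det (θ : ℝ) : (Ry θ).det = 1 := by
  rw [Ry, det_succ_row_zero]
  simp [Fin.sum_univ_succ, det_fin_three, Matrix.vecHead, Matrix.vecTail, Function.comp,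
    (by decide : (Fin.castSucc 2 : Fin 4) = 2), (by decide : (Fin.castSucc 1 : Fin 4) = 1),
    (by decide : (Fin.castSucc 0 : Fin 4) = 0)]
  nlinarith [Real.sin_sq_add_cos_sq θ]

lemma Bz_det (χ : ℝ) : (Bz χ).det = 1 := by
  rw [Bz, det_succ_row_zero]
  simp [Fin.sum_univ_succ, det_fin_three, Matrix.vecHead, Matrix.vecTail, Function.comp,
    (by decide : (Fin.castSucc 2 : Fin 4) = 2), (by decide : (Fin.castSucc 1 : Fin 4) = 1),
    (by decide : (Fin.castSucc 0 : Fin 4) = 0)]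
  rw [show (Fin.succAbove (3 : Fin 4) (2 : Fin 3)) = 2 from by decide,
    show (![0, 0, 1, 0] : Fin 4 → ℝ) 2 = 1 from rfl]
  nlinarith [Real.cosh_sq_sub_sinh_sq χ]


open Real in
/-- SU(2) lift of Rz (half-angle form). -/
def Uz (θ : ℝ) : Matrix (Fin 2) (Fin 2) ℂ :=
  !![(cos θ : ℂ) - (sin θ : ℂ) * Complex.I, 0; 0, (cos θ : ℂ) + (sin θ : ℂ) * Complex.I]

open Real in
/-- SU(2) lift of Ry (half-angle form). -/
def Uy (θ : ℝ) : Matrix (Fin 2) (Fin 2) ℂ :=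
  !![(cos θ : ℂ), -(sin θ : ℂ); (sin θ : ℂ), (cos θ : ℂ)]

open Real in
/-- SL(2,ℂ) lift of Bz (half-rapidity form). -/
def Kz (χ : ℝ) : Matrix (Fin 2) (Fin 2) ℂ :=
  !![(exp χ : ℂ), 0; 0, (exp (-χ) : ℂ)]

/-- The intertwining property. -/
def Pprop (A : Matrix (Fin 2) (Fin 2) ℂ) (L : Matrix (Fin 4) (Fin 4) ℝ) : Prop :=
  ∀ k : Fin 4, A * pauli k * Aᴴ = ∑ i : Fin 4, (L i k : ℂ) • pauli i

set_option linter.unreachableTactic false in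
set_option linter.unusedTactic false in
lemma Pprop_Uz (θ : ℝ) : Pprop (Uz θ) (Rz (2*θ)) := by
  intro k
  have hp : (Real.cos θ : ℂ)^2 + (Real.sin θ : ℂ)^2 = 1 := by
    norm_cast; exact Real.cos_sq_add_sin_sq _
  have hc : (Real.cos (2*θ) : ℂ) = (Real.cos θ : ℂ)^2 - (Real.sin θ : ℂ)^2 := by
    norm_cast
    have h1 := Real.cos_two_mul θ
    have h3 := Real.sin_sq_add_cos_sq θ
    linarith
  have hs : (Real.sin (2*θ) : ℂ) = 2 * (Real.sin θ : ℂ) * (Real.cos θ : ℂ) := by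
    norm_cast; exact Real.sin_two_mul θ
  fin_cases k <;> ext i j <;> fin_cases i <;> fin_cases j <;>
    simp [Uz, Rz, pauli, mul_apply, conjTranspose_apply, Fin.sum_univ_two, Fin.sum_univ_four,
      Matrix.sum_apply, Matrix.smul_apply, Matrix.one_apply, Matrix.vecHead, Matrix.vecTail,
      Function.comp, Complex.conj_ofReal, hc, hs,
      -Complex.ofReal_cos, -Complex.ofReal_sin] <;>
    (try ring_nf) <;>
    (try rw [show (Complex.I)^3 = -Complex.I from by
        rw [pow_succ, Complex.I_sq]; ring]) <;>
    (try rw [Complex.I_sq]) <;>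
    (first
      | ring1
      | linear_combination hp
      | linear_combination -hp
      | linear_combination Complex.I * hp
      | linear_combination -Complex.I * hp
      | linear_combination 2 * hp
      | linear_combination -2 * hp)

set_option linter.unreachableTactic false in
set_option linter.unusedTactic false in
lemma Pprop_Uy (θ : ℝ) : Pprop (Uy θ) (Ry (2*θ)) := by
  intro k
  have hp : (Real.cos θ : ℂ)^2 + (Real.sin θ : ℂ)^2 = 1 := by
    norm_cast; exact Real.cos_sq_add_sin_sq _
  have hc : (Real.cos (2*θ) : ℂ) = (Real.cos θ : ℂ)^2 - (Real.sin θ : ℂ)^2 := by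
    norm_cast
    have h1 := Real.cos_two_mul θ
    have h3 := Real.sin_sq_add_cos_sq θ
    linarith
  have hs : (Real.sin (2*θ) : ℂ) = 2 * (Real.sin θ : ℂ) * (Real.cos θ : ℂ) := by
    norm_cast; exact Real.sin_two_mul θ
  fin_cases k <;> ext i j <;> fin_cases i <;> fin_cases j <;>
    simp [Uy, Ry, pauli, mul_apply, conjTranspose_apply, Fin.sum_univ_two, Fin.sum_univ_four,
      Matrix.sum_apply, Matrix.smul_apply, Matrix.one_apply, Matrix.vecHead, Matrix.vecTail,
      Function.comp, Complex.conj_ofReal, hc, hs,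
      -Complex.ofReal_cos, -Complex.ofReal_sin] <;>
    (try ring_nf) <;>
    (try rw [show (Complex.I)^3 = -Complex.I from by
        rw [pow_succ, Complex.I_sq]; ring]) <;>
    (try rw [Complex.I_sq]) <;>
    (first
      | ring1
      | linear_combination hp
      | linear_combination -hp
      | linear_combination Complex.I * hp
      | linear_combination -Complex.I * hp
      | linear_combination 2 * hp
      | linear_combination -2 * hp)

set_option linter.unreachableTactic false in
set_option linter.unusedTactic false in
lemma Pprop_Kz (χ : ℝ) : Pprop (Kz χ) (Bz (2*χ)) := by
  intro k
  have hab : (Real.exp χ : ℂ) * (Real.exp (-χ) : ℂ) = 1 := by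
    norm_cast; rw [← Real.exp_add]; simp
  have hc : (Real.cosh (2*χ) : ℂ)
      = ((Real.exp χ : ℂ)^2 + (Real.exp (-χ) : ℂ)^2)/2 := by
    norm_cast
    rw [Real.cosh_eq]
    rw [show (2:ℝ)*χ = χ + χ by ring, Real.exp_add, show -(χ+χ) = -χ + -χ by ring, Real.exp_add]
    ring
  have hs : (Real.sinh (2*χ) : ℂ)
      = ((Real.exp χ : ℂ)^2 - (Real.exp (-χ) : ℂ)^2)/2 := by
    norm_cast
    rw [Real.sinh_eq]
    rw [show (2:ℝ)*χ = χ + χ by ring, Real.exp_add, show -(χ+χ) = -χ + -χ by ring, Real.exp_add]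
    ring
  fin_cases k <;> ext i j <;> fin_cases i <;> fin_cases j <;>
    simp [Kz, Bz, pauli, mul_apply, conjTranspose_apply, Fin.sum_univ_two, Fin.sum_univ_four,
      Matrix.sum_apply, Matrix.smul_apply, Matrix.one_apply, Matrix.vecHead, Matrix.vecTail,
      Function.comp, Complex.conj_ofReal, hc, hs,
      -Complex.ofReal_exp] <;>
    (try ring_nf) <;>
    (try rw [Complex.I_sq]) <;>
    (first
      | ring1
      | linear_combination hab
      | linear_combination -hab
      | linear_combination Complex.I * hab
      | linear_combination -Complex.I * hab)

lemma Uz_det (θ : ℝ) : (Uz θ).det = 1 := by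
  have hp : (Real.cos θ : ℂ)^2 + (Real.sin θ : ℂ)^2 = 1 := by
    norm_cast; exact Real.cos_sq_add_sin_sq _
  simp [Uz, Matrix.det_fin_two_of, -Complex.ofReal_cos, -Complex.ofReal_sin]
  linear_combination hp - (Real.sin θ : ℂ)^2 * Complex.I_sq

lemma Uy_det (θ : ℝ) : (Uy θ).det = 1 := by
  have hp : (Real.cos θ : ℂ)^2 + (Real.sin θ : ℂ)^2 = 1 := by
    norm_cast; exact Real.cos_sq_add_sin_sq _
  simp [Uy, Matrix.det_fin_two_of, -Complex.ofReal_cos, -Complex.ofReal_sin]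
  linear_combination hp

lemma Kz_det (χ : ℝ) : (Kz χ).det = 1 := by
  have hab : (Real.exp χ : ℂ) * (Real.exp (-χ) : ℂ) = 1 := by
    norm_cast; rw [← Real.exp_add]; simp
  simp [Kz, Matrix.det_fin_two_of, -Complex.ofReal_exp]
  linear_combination hab

lemma Pprop_mul {A B : Matrix (Fin 2) (Fin 2) ℂ} {L M : Matrix (Fin 4) (Fin 4) ℝ}
    (hA : Pprop A L) (hB : Pprop B M) : Pprop (A * B) (L * M) := by
  intro k
  rw [conjTranspose_mul]
  calc A * B * pauli k * (Bᴴ * Aᴴ) = A * (B * pauli k * Bᴴ) * Aᴴ := by noncomm_ring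
    _ = A * (∑ j : Fin 4, (M j k : ℂ) • pauli j) * Aᴴ := by rw [hB k]
    _ = ∑ j : Fin 4, (M j k : ℂ) • (A * pauli j * Aᴴ) := by
        rw [Finset.mul_sum, Finset.sum_mul]
        congr 1; ext j
        rw [Matrix.mul_smul, Matrix.smul_mul]
    _ = ∑ j : Fin 4, (M j k : ℂ) • (∑ i : Fin 4, (L i j : ℂ) • pauli i) := by
        congr 1; ext j; rw [hA j]
    _ = ∑ j : Fin 4, ∑ i : Fin 4, ((M j k : ℂ) * (L i j : ℂ)) • pauli i := by
        apply Finset.sum_congr rfl; intro j _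
        rw [Finset.smul_sum]; simp_rw [smul_smul]
    _ = ∑ i : Fin 4, ∑ j : Fin 4, ((M j k : ℂ) * (L i j : ℂ)) • pauli i := Finset.sum_comm
    _ = ∑ i : Fin 4, ((L * M) i k : ℂ) • pauli i := by
        apply Finset.sum_congr rfl; intro i _
        rw [← Finset.sum_smul]
        congr 1
        rw [Matrix.mul_apply]
        push_cast
        apply Finset.sum_congr rfl; intro j _; ring


lemma pauli_mul_trace (m i : Fin 4) :
    (pauli m * pauli i).trace = if m = i then 2 else 0 := by
  fin_cases m <;> fin_cases i <;>
    simp [pauli, Matrix.trace, Matrix.diag, mul_apply, Fin.sum_univ_two, Complex.I_mul_I] <;>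
    ring

lemma pauli_expand (X : Matrix (Fin 2) (Fin 2) ℂ) :
    (2:ℂ) • X = ∑ k : Fin 4, (X * pauli k).trace • pauli k := by
  ext i j
  fin_cases i <;> fin_cases j <;>
    simp [pauli, Matrix.trace, Matrix.diag, mul_apply, Fin.sum_univ_two, Fin.sum_univ_four,
      Matrix.sum_apply, Matrix.smul_apply, Complex.I_mul_I, Matrix.vecHead, Matrix.vecTail,
      Function.comp] <;>
    (first
      | ring1
      | (rw [Complex.I_sq]; ring1)
      | (ring_nf; rw [Complex.I_sq]; ring1))

lemma Pprop_trace {A : Matrix (Fin 2) (Fin 2) ℂ} {L : Matrix (Fin 4) (Fin 4) ℝ}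
    (h : Pprop A L) (X : Matrix (Fin 2) (Fin 2) ℂ) (i : Fin 4) :
    (A * X * Aᴴ * pauli i).trace = ∑ j : Fin 4, (L i j : ℂ) * (X * pauli j).trace := by
  have key : ∀ k, (A * pauli k * Aᴴ * pauli i).trace = 2 * (L i k : ℂ) := by
    intro k
    rw [h k, Finset.sum_mul, trace_sum]
    rw [Finset.sum_congr rfl
      (fun m _ => by rw [smul_mul_assoc, trace_smul, pauli_mul_trace])]
    simp [Finset.sum_ite_eq', smul_eq_mul, mul_comm]
  apply mul_left_cancel₀ (two_ne_zero (α := ℂ))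
  calc (2:ℂ) * (A * X * Aᴴ * pauli i).trace
      = ((A * ((2:ℂ) • X) * Aᴴ) * pauli i).trace := by
        rw [Matrix.mul_smul, Matrix.smul_mul, Matrix.smul_mul, trace_smul, smul_eq_mul]
    _ = ((A * (∑ k : Fin 4, (X * pauli k).trace • pauli k) * Aᴴ) * pauli i).trace := by
        rw [pauli_expand]
    _ = ∑ k : Fin 4, (X * pauli k).trace * (A * pauli k * Aᴴ * pauli i).trace := by
        rw [Finset.mul_sum, Finset.sum_mul, Finset.sum_mul, trace_sum]
        apply Finset.sum_congr rfl; intro k _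
        rw [Matrix.mul_smul, Matrix.smul_mul, Matrix.smul_mul, trace_smul, smul_eq_mul]
    _ = ∑ k : Fin 4, (X * pauli k).trace * (2 * (L i k : ℂ)) := by
        apply Finset.sum_congr rfl; intro k _; rw [key]
    _ = 2 * ∑ j : Fin 4, (L i j : ℂ) * (X * pauli j).trace := by
        rw [Finset.mul_sum]; apply Finset.sum_congr rfl; intro j _; ring


lemma eta_mul_eta : η * η = 1 := by
  ext i j
  fin_cases i <;> fin_cases j <;>
    simp [η, mul_apply, Matrix.diagonal, Fin.sum_univ_four, Matrix.one_apply,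
      Matrix.vecHead, Matrix.vecTail, Function.comp]

lemma lorentz_entry {M : Matrix (Fin 4) (Fin 4) ℝ} (hM : Mᵀ * η * M = η) (i j : Fin 4) :
    M 0 i * M 0 j - M 1 i * M 1 j - M 2 i * M 2 j - M 3 i * M 3 j = η i j := by
  have h : (Mᵀ * η * M) i j = η i j := by rw [hM]
  simp only [mul_apply, transpose_apply, Fin.sum_univ_four] at h
  rw [show η 0 0 = 1 from by norm_num [η, Matrix.diagonal]; try decide,
      show η 0 1 = 0 from by norm_num [η, Matrix.diagonal]; try decide,
      show η 0 2 = 0 from by norm_num [η, Matrix.diagonal]; try decide,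
      show η 0 3 = 0 from by norm_num [η, Matrix.diagonal]; try decide,
      show η 1 0 = 0 from by norm_num [η, Matrix.diagonal]; try decide,
      show η 1 1 = -1 from by norm_num [η, Matrix.diagonal]; try decide,
      show η 1 2 = 0 from by norm_num [η, Matrix.diagonal]; try decide,
      show η 1 3 = 0 from by norm_num [η, Matrix.diagonal]; try decide,
      show η 2 0 = 0 from by norm_num [η, Matrix.diagonal]; try decide,
      show η 2 1 = 0 from by norm_num [η, Matrix.diagonal]; try decide,
      show η 2 2 = -1 from by norm_num [η, Matrix.diagonal]; rfl,
      show η 2 3 = 0 from by norm_num [η, Matrix.diagonal]; try decide,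
      show η 3 0 = 0 from by norm_num [η, Matrix.diagonal]; try decide,
      show η 3 1 = 0 from by norm_num [η, Matrix.diagonal]; try decide,
      show η 3 2 = 0 from by norm_num [η, Matrix.diagonal]; try decide,
      show η 3 3 = -1 from by norm_num [η, Matrix.diagonal]; rfl] at h
  ring_nf at h ⊢
  linarith [h]

lemma lorentz_row {M : Matrix (Fin 4) (Fin 4) ℝ} (hM : Mᵀ * η * M = η) :
    M * η * Mᵀ = η := by
  have h1 : (η * Mᵀ * η) * M = 1 := by
    calc (η * Mᵀ * η) * M = η * (Mᵀ * η * M) := by noncomm_ring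
      _ = η * η := by rw [hM]
      _ = 1 := eta_mul_eta
  have h2 : M * (η * Mᵀ * η) = 1 := mul_eq_one_comm.mp h1
  calc M * η * Mᵀ = M * η * Mᵀ * (η * η) := by rw [eta_mul_eta, mul_one]
    _ = (M * (η * Mᵀ * η)) * η := by noncomm_ring
    _ = η := by rw [h2, one_mul]

lemma lorentz_entry' {M : Matrix (Fin 4) (Fin 4) ℝ} (hM : Mᵀ * η * M = η) (i j : Fin 4) :
    M i 0 * M j 0 - M i 1 * M j 1 - M i 2 * M j 2 - M i 3 * M j 3 = η i j := by
  have h : Mᵀᵀ * η * Mᵀ = η := by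
    rw [transpose_transpose]; exact lorentz_row hM
  simpa [transpose_apply] using lorentz_entry h i j

lemma det_special (M : Matrix (Fin 4) (Fin 4) ℝ) (h00 : M 0 0 = 1) (h10 : M 1 0 = 0)
    (h20 : M 2 0 = 0) (h30 : M 3 0 = 0) (h01 : M 0 1 = 0) (h02 : M 0 2 = 0) (h03 : M 0 3 = 0)
    (h33 : M 3 3 = 1) (h13 : M 1 3 = 0) (h23 : M 2 3 = 0) (h31 : M 3 1 = 0) (h32 : M 3 2 = 0) :
    M.det = M 1 1 * M 2 2 - M 1 2 * M 2 1 := by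
  rw [det_succ_row_zero]
  simp [Fin.sum_univ_succ, det_fin_three, submatrix, h00, h10, h20, h30, h01, h02, h03, h33,
    h13, h23, h31, h32,
    (by decide : (Fin.succ 2 : Fin 4) = 3), (by decide : (Fin.castSucc 2 : Fin 4) = 2),
    (by decide : (Fin.succ 1 : Fin 4) = 2), (by decide : (Fin.succ 0 : Fin 4) = 1)]

set_option maxHeartbeats 2000000 in
/-- The key decomposition of a proper orthochronous Lorentz matrix. -/
lemma decomp (L : Matrix (Fin 4) (Fin 4) ℝ) (hL : LorentzPO L) :
    ∃ a b c a' b' g : ℝ,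
      L = (Rz a * (Ry b * Bz c)) * (Rz a' * (Ry b' * Rz g)) := by
  obtain ⟨hη, hdet, h00⟩ := hL
  have hL00 : (0:ℝ) ≤ L 0 0 := by linarith
  have e00 : L 0 0 * L 0 0 - L 1 0 * L 1 0 - L 2 0 * L 2 0 - L 3 0 * L 3 0 = 1 := by
    have := lorentz_entry hη 0 0
    rwa [show η 0 0 = 1 from by norm_num [η, Matrix.diagonal]; try decide] at this
  set r := Real.sqrt (L 0 0 ^ 2 - 1) with hrdef
  have hr0 : (0:ℝ) ≤ r := Real.sqrt_nonneg _
  have hr2 : r ^ 2 = L 0 0 ^ 2 - 1 := Real.sq_sqrt (by nlinarith)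
  obtain ⟨a, b, hx, hy, hz⟩ := sphere (L 1 0) (L 2 0) (L 3 0) r hr0 (by
    ring_nf; ring_nf at e00 hr2; linarith)
  set c := Real.arsinh r with hcdef
  have hsinh : Real.sinh c = r := Real.sinh_arsinh r
  have hcosh : Real.cosh c = L 0 0 := by
    rw [hcdef, Real.cosh_arsinh, show 1 + r ^ 2 = L 0 0 ^ 2 from by linarith, Real.sqrt_sq hL00]
  obtain ⟨F, hFdef⟩ : ∃ F, F = Rz a * (Ry b * Bz c) := ⟨_, rfl⟩
  have hcol : ∀ i, F i 0 = L i 0 := by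
    intro i
    rw [hFdef]
    fin_cases i <;>
      simp [Rz, Ry, Bz, mul_apply, Fin.sum_univ_four, Matrix.vecHead, Matrix.vecTail,
        Function.comp] <;>
      (first
        | linear_combination hcosh
        | linear_combination hx + (Real.sin b * Real.cos a) * hsinh
        | linear_combination hy + (Real.sin b * Real.sin a) * hsinh
        | linear_combination hz + (Real.cos b) * hsinh)
  have inv3 : ∀ X Y Z X' Y' Z' : Matrix (Fin 4) (Fin 4) ℝ, X' * X = 1 → Y' * Y = 1 →
      Z' * Z = 1 → (Z' * (Y' * X')) * (X * (Y * Z)) = 1 := by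
    intro X Y Z X' Y' Z' hX hY hZ
    calc (Z' * (Y' * X')) * (X * (Y * Z)) = Z' * ((Y' * ((X' * X) * Y)) * Z) := by
          noncomm_ring
      _ = 1 := by rw [hX, one_mul, hY, one_mul, hZ]
  obtain ⟨G, hGdef⟩ : ∃ G, G = Bz (-c) * (Ry (-b) * Rz (-a)) := ⟨_, rfl⟩
  have hGF : G * F = 1 := by
    rw [hGdef, hFdef]
    exact inv3 _ _ _ _ _ _ (Rz_neg_mul a) (Ry_neg_mul b) (Bz_neg_mul c)
  have hFG : F * G = 1 := mul_eq_one_comm.mp hGF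
  obtain ⟨M, hMdef⟩ : ∃ M, M = G * L := ⟨_, rfl⟩
  have hLM : L = F * M := by rw [hMdef, ← mul_assoc, hFG, one_mul]
  have hGη : Gᵀ * η * G = η := by
    rw [hGdef]
    exact mul_lorentz (Bz_lorentz _) (mul_lorentz (Ry_lorentz _) (Rz_lorentz _))
  have hMη : Mᵀ * η * M = η := by rw [hMdef]; exact mul_lorentz hGη hη
  have hMdet : M.det = 1 := by
    rw [hMdef, det_mul, hGdef, det_mul, det_mul, Bz_det, Ry_det, Rz_det, hdet]; ring
  have hMcol : ∀ i, M i 0 = (1 : Matrix (Fin 4) (Fin 4) ℝ) i 0 := by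
    intro i
    have h1 : M i 0 = ∑ k, G i k * L k 0 := by rw [hMdef, mul_apply]
    rw [h1, Finset.sum_congr rfl (fun k _ => by rw [← hcol k]), ← mul_apply, hGF]
  have hM00 : M 0 0 = 1 := by simpa [Matrix.one_apply] using hMcol 0
  have hM10 : M 1 0 = 0 := by simpa [Matrix.one_apply] using hMcol 1
  have hM20 : M 2 0 = 0 := by simpa [Matrix.one_apply] using hMcol 2
  have hM30 : M 3 0 = 0 := by simpa [Matrix.one_apply] using hMcol 3
  have hrow0 : M 0 0 * M 0 0 - M 0 1 * M 0 1 - M 0 2 * M 0 2 - M 0 3 * M 0 3 = 1 := by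
    have := lorentz_entry' hMη 0 0
    rwa [show η 0 0 = 1 from by norm_num [η, Matrix.diagonal]; try decide] at this
  have hM01 : M 0 1 = 0 := by
    rw [hM00] at hrow0
    refine mul_self_eq_zero.mp ?_
    have := mul_self_nonneg (M 0 1); have := mul_self_nonneg (M 0 2)
    have := mul_self_nonneg (M 0 3); linarith
  have hM02 : M 0 2 = 0 := by
    rw [hM00] at hrow0
    refine mul_self_eq_zero.mp ?_
    have := mul_self_nonneg (M 0 1); have := mul_self_nonneg (M 0 2)
    have := mul_self_nonneg (M 0 3); linarith
  have hM03 : M 0 3 = 0 := by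
    rw [hM00] at hrow0
    refine mul_self_eq_zero.mp ?_
    have := mul_self_nonneg (M 0 1); have := mul_self_nonneg (M 0 2)
    have := mul_self_nonneg (M 0 3); linarith
  have e33 : M 0 3 * M 0 3 - M 1 3 * M 1 3 - M 2 3 * M 2 3 - M 3 3 * M 3 3 = -1 := by
    have := lorentz_entry hMη 3 3
    rwa [show η 3 3 = -1 from by norm_num [η, Matrix.diagonal]; rfl] at this
  obtain ⟨a', b', hx', hy', hz'⟩ := sphere (M 1 3) (M 2 3) (M 3 3) 1 zero_le_one
    (by rw [hM03] at e33; ring_nf; ring_nf at e33; linarith)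
  have hx'' : M 1 3 = Real.sin b' * Real.cos a' := by linarith
  have hy'' : M 2 3 = Real.sin b' * Real.sin a' := by linarith
  have hz'' : M 3 3 = Real.cos b' := by linarith
  obtain ⟨N, hNdef⟩ : ∃ N, N = Ry (-b') * (Rz (-a') * M) := ⟨_, rfl⟩
  have hNη : Nᵀ * η * N = η := by
    rw [hNdef]
    exact mul_lorentz (Ry_lorentz _) (mul_lorentz (Rz_lorentz _) hMη)
  have hNdet : N.det = 1 := by
    rw [hNdef, det_mul, det_mul, Ry_det, Rz_det, hMdet]; ring
  have hNcol0 : ∀ i, N i 0 = (1 : Matrix (Fin 4) (Fin 4) ℝ) i 0 := by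
    intro i
    rw [hNdef, mul_apply]
    have h1 : ∀ k, (Rz (-a') * M) k 0 = (1 : Matrix (Fin 4) (Fin 4) ℝ) k 0 := by
      intro k
      rw [mul_apply]
      fin_cases k <;>
        simp [Rz, Fin.sum_univ_four, Matrix.one_apply, hM00, hM10, hM20, hM30,
          Matrix.vecHead, Matrix.vecTail, Function.comp]
    rw [Finset.sum_congr rfl (fun k _ => by rw [h1 k])]
    fin_cases i <;>
      simp [Ry, Fin.sum_univ_four, Matrix.one_apply, Matrix.vecHead, Matrix.vecTail,
        Function.comp]
  have hN00 : N 0 0 = 1 := by simpa [Matrix.one_apply] using hNcol0 0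
  have hN10 : N 1 0 = 0 := by simpa [Matrix.one_apply] using hNcol0 1
  have hN20 : N 2 0 = 0 := by simpa [Matrix.one_apply] using hNcol0 2
  have hN30 : N 3 0 = 0 := by simpa [Matrix.one_apply] using hNcol0 3
  have hNrow0 : ∀ j, N 0 j = M 0 j := by
    intro j
    rw [hNdef, mul_apply]
    have h1 : ∀ k, (Rz (-a') * M) k j = ∑ l, Rz (-a') k l * M l j := fun k => mul_apply ..
    rw [Finset.sum_congr rfl (fun k _ => by rw [h1 k])]
    simp [Ry, Rz, Fin.sum_univ_four, Matrix.vecHead, Matrix.vecTail, Function.comp]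
  have hN01 : N 0 1 = 0 := by rw [hNrow0]; exact hM01
  have hN02 : N 0 2 = 0 := by rw [hNrow0]; exact hM02
  have hN03 : N 0 3 = 0 := by rw [hNrow0]; exact hM03
  have pyth_a : Real.cos a' ^ 2 + Real.sin a' ^ 2 = 1 := Real.cos_sq_add_sin_sq a'
  have pyth_b : Real.cos b' ^ 2 + Real.sin b' ^ 2 = 1 := Real.cos_sq_add_sin_sq b'
  have hNcol3 : ∀ i, N i 3 = (if i = 3 then (1:ℝ) else 0) := by
    intro i
    rw [hNdef, mul_apply]
    have h1 : ∀ k, (Rz (-a') * M) k 3 = ∑ l, Rz (-a') k l * M l 3 := fun k => mul_apply ..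
    rw [Finset.sum_congr rfl (fun k _ => by rw [h1 k])]
    fin_cases i <;>
      simp [Ry, Rz, Fin.sum_univ_four, Matrix.vecHead, Matrix.vecTail, Function.comp,
        hM03, hx'', hy'', hz''] <;>
      (first
        | ring1
        | linear_combination (Real.cos b' * Real.sin b') * pyth_a
        | linear_combination (Real.sin b' ^ 2) * pyth_a + pyth_b
        | linear_combination (Real.sin b' * Real.cos b') * pyth_a
        | linear_combination (- Real.sin b' * Real.cos b') * pyth_a
        | linear_combination (- Real.cos b' * Real.sin b') * pyth_a)
  have hN13 : N 1 3 = 0 := by simpa using hNcol3 1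
  have hN23 : N 2 3 = 0 := by simpa using hNcol3 2
  have hN33 : N 3 3 = 1 := by simpa using hNcol3 3
  have e13 : N 0 1 * N 0 3 - N 1 1 * N 1 3 - N 2 1 * N 2 3 - N 3 1 * N 3 3 = 0 := by
    have := lorentz_entry hNη 1 3
    rwa [show η 1 3 = 0 from by norm_num [η, Matrix.diagonal]; try decide] at this
  have e23 : N 0 2 * N 0 3 - N 1 2 * N 1 3 - N 2 2 * N 2 3 - N 3 2 * N 3 3 = 0 := by
    have := lorentz_entry hNη 2 3
    rwa [show η 2 3 = 0 from by norm_num [η, Matrix.diagonal]; try decide] at this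
  have hN31 : N 3 1 = 0 := by
    rw [hN01, hN13, hN23, hN33] at e13; linarith [e13]
  have hN32 : N 3 2 = 0 := by
    rw [hN02, hN13, hN23, hN33] at e23; linarith [e23]
  have e11 : N 0 1 * N 0 1 - N 1 1 * N 1 1 - N 2 1 * N 2 1 - N 3 1 * N 3 1 = -1 := by
    have := lorentz_entry hNη 1 1
    rwa [show η 1 1 = -1 from by norm_num [η, Matrix.diagonal]; try decide] at this
  have e12 : N 0 1 * N 0 2 - N 1 1 * N 1 2 - N 2 1 * N 2 2 - N 3 1 * N 3 2 = 0 := by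
    have := lorentz_entry hNη 1 2
    rwa [show η 1 2 = 0 from by norm_num [η, Matrix.diagonal]; try decide] at this
  have hq1 : N 1 1 * N 1 1 + N 2 1 * N 2 1 = 1 := by
    rw [hN01, hN31] at e11; linarith [e11]
  have hortho : N 1 1 * N 1 2 + N 2 1 * N 2 2 = 0 := by
    rw [hN01, hN31] at e12; linarith [e12]
  have hdetN : N 1 1 * N 2 2 - N 1 2 * N 2 1 = 1 := by
    have := det_special N hN00 hN10 hN20 hN30 hN01 hN02 hN03 hN33 hN13 hN23 hN31 hN32
    rw [hNdet] at this; linarith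
  obtain ⟨g, hg1, hg2⟩ := circle (N 1 1) (N 2 1) 1 zero_le_one (by
    ring_nf; ring_nf at hq1; linarith)
  have hg1' : Real.cos g = N 1 1 := by linarith
  have hg2' : Real.sin g = N 2 1 := by linarith
  have hN12 : N 1 2 = - N 2 1 := by
    linear_combination (N 1 1) * hortho - (N 2 1) * hdetN - (N 1 2) * hq1
  have hN22 : N 2 2 = N 1 1 := by
    linear_combination (N 2 1) * hortho + (N 1 1) * hdetN - (N 2 2) * hq1
  have hNRz : N = Rz g := by
    ext i j
    fin_cases i <;> fin_cases j <;>
      simp [Rz, Matrix.vecHead, Matrix.vecTail, Function.comp, hg1', hg2'] <;>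
      linarith [hN00, hN10, hN20, hN30, hN01, hN02, hN03, hN13, hN23, hN33, hN31, hN32,
        hN12, hN22]
  have hMN : Rz a' * (Ry b' * N) = M := by
    rw [hNdef, ← mul_assoc (Ry b'), Ry_mul_neg, one_mul, ← mul_assoc, Rz_mul_neg, one_mul]
  exact ⟨a, b, c, a', b', g, by rw [hLM, ← hMN, hNRz, hFdef]⟩

end SL2L

open SL2L

theorem sl2_to_lorentz_surjective (L : Matrix (Fin 4) (Fin 4) ℝ) (hL : LorentzPO L) :
    ∃ A : Matrix (Fin 2) (Fin 2) ℂ, A.det = 1 ∧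
      ∀ (X : Matrix (Fin 2) (Fin 2) ℂ) (i : Fin 4),
        (A * X * Aᴴ * pauli i).trace = ∑ j : Fin 4, (L i j : ℂ) * (X * pauli j).trace := by
  obtain ⟨a, b, c, a', b', g, hdec⟩ := decomp L hL
  have hUa : Pprop (Uz (a/2)) (Rz a) := by
    have := Pprop_Uz (a/2); rwa [show 2*(a/2) = a from by ring] at this
  have hUb : Pprop (Uy (b/2)) (Ry b) := by
    have := Pprop_Uy (b/2); rwa [show 2*(b/2) = b from by ring] at this
  have hUc : Pprop (Kz (c/2)) (Bz c) := by
    have := Pprop_Kz (c/2); rwa [show 2*(c/2) = c from by ring] at this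
  have hUa' : Pprop (Uz (a'/2)) (Rz a') := by
    have := Pprop_Uz (a'/2); rwa [show 2*(a'/2) = a' from by ring] at this
  have hUb' : Pprop (Uy (b'/2)) (Ry b') := by
    have := Pprop_Uy (b'/2); rwa [show 2*(b'/2) = b' from by ring] at this
  have hUg : Pprop (Uz (g/2)) (Rz g) := by
    have := Pprop_Uz (g/2); rwa [show 2*(g/2) = g from by ring] at this
  refine ⟨(Uz (a/2) * (Uy (b/2) * Kz (c/2))) * (Uz (a'/2) * (Uy (b'/2) * Uz (g/2))), ?_, ?_⟩
  · simp [det_mul, Uz_det, Uy_det, Kz_det]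
  · intro X i
    rw [hdec]
    exact Pprop_trace
      (Pprop_mul (Pprop_mul hUa (Pprop_mul hUb hUc))
        (Pprop_mul hUa' (Pprop_mul hUb' hUg))) X i
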